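/- arXiv:0905.4219 — 4 statements merged into one kernel-verified Lean document; each statement's English description precedes it below -/
import Mathlib

section
/- Consider a GSWF on three alternatives with n voters satisfying the IIA condition, with choice functions f, g, h : {0,1}^n → {0,1} and with the individual preferences distributed according to an even product distribution D(α,β,γ). Then the probability of irrational choice satisfies W(f,g,h) = p₁p₂p₃ + (1−p₁)(1−p₂)(1−p₃) + ⟨⟨f,g⟩⟩_{4α−1} + ⟨⟨g,h⟩⟩_{4β−1} + ⟨⟨h,f⟩⟩_{4γ−1}, where p₁ = E[f], p₂ = E[g], p₃ = E[h] are the expectations of f, g, h under the uniform measure on {0,1}^n. -/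
/-!
Each of `x`, `y`, `z` is uniformly distributed under `D(α,β,γ)`, and each pair of them is a
`ρ`-correlated pair of uniform points: `(x, y)` with `ρ = 4α - 1`, `(y, z)` with `ρ = 4β - 1`,
`(z, x)` with `ρ = 4γ - 1`. The density of a `ρ`-correlated pair is
`4⁻ⁿ ∏ᵢ (1 + ρ (2xᵢ - 1)(2yᵢ - 1)) = 4⁻ⁿ ∑_S ρ^|S| r_S(x) r_S(y)`, so the correlation
`E[f(x) g(y)]` is `∑_S ρ^|S| f̂(S) ĝ(S) = E f E g + ⟨⟨f, g⟩⟩_ρ`. The formula follows by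
linearity, since `f g h + (1 - f)(1 - g)(1 - h) = (1 - f)(1 - g) + g h + (h f - h)` is a sum of
terms each depending on one pair of the three profiles.
-/

open Finset Real

noncomputable section

namespace GSWF

/-- Walsh function `r_S(x) = ∏_{i∈S} (2 x_i - 1)` on the discrete cube. -/
def walsh {n : ℕ} (S : Finset (Fin n)) (x : Fin n → Bool) : ℝ :=
  ∏ i ∈ S, (if x i then (1 : ℝ) else -1)

/-- Fourier–Walsh coefficient `f̂(S) = 2^{-n} ∑_x f(x) r_S(x)`. -/
def coeff {n : ℕ} (f : (Fin n → Bool) → ℝ) (S : Finset (Fin n)) : ℝ :=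
  (∑ x : Fin n → Bool, f x * walsh S x) / 2 ^ n

/-- Expectation under the uniform measure on the discrete cube. -/
def expect {n : ℕ} (f : (Fin n → Bool) → ℝ) : ℝ :=
  (∑ x : Fin n → Bool, f x) / 2 ^ n

/-- Biased inner product `⟨⟨f,g⟩⟩_δ = ∑_{S ≠ ∅} f̂(S) ĝ(S) δ^{|S|}`. -/
def bip {n : ℕ} (δ : ℝ) (f g : (Fin n → Bool) → ℝ) : ℝ :=
  ∑ S ∈ Finset.univ.filter (fun S : Finset (Fin n) => S ≠ ∅),
    coeff f S * coeff g S * δ ^ S.card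

/-- Probability of a single voter's preference triple under `D(α,β,γ)`. -/
def prTriple (α β γ : ℝ) : Bool → Bool → Bool → ℝ
  | true, true, false => α
  | false, false, true => α
  | false, true, true => β
  | true, false, false => β
  | true, false, true => γ
  | false, true, false => γ
  | _, _, _ => 0

/-- Probability of a profile under the even product distribution `D(α,β,γ)`. -/
def prProfile {n : ℕ} (α β γ : ℝ) (x y z : Fin n → Bool) : ℝ :=
  ∏ i, prTriple α β γ (x i) (y i) (z i)

/-- Probability of an irrational outcome `W(f,g,h)` under `D(α,β,γ)`. -/
def W {n : ℕ} (α β γ : ℝ) (f g h : (Fin n → Bool) → ℝ) : ℝ :=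
  ∑ x : Fin n → Bool, ∑ y : Fin n → Bool, ∑ z : Fin n → Bool,
    prProfile α β γ x y z *
      (f x * g y * h z + (1 - f x) * (1 - g y) * (1 - h z))

/-- A real-valued function on the cube that takes only the values 0 and 1. -/
def IsBooleanFn {n : ℕ} (f : (Fin n → Bool) → ℝ) : Prop :=
  ∀ x, f x = 0 ∨ f x = 1

/-- Monotone increasing function on the discrete cube. -/
def MonotoneCube {n : ℕ} (f : (Fin n → Bool) → ℝ) : Prop :=
  ∀ x y : Fin n → Bool, (∀ i, x i ≤ y i) → f x ≤ f y

/-- Monotone decreasing function on the discrete cube. -/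
def AntitoneCube {n : ℕ} (f : (Fin n → Bool) → ℝ) : Prop :=
  ∀ x y : Fin n → Bool, (∀ i, x i ≤ y i) → f y ≤ f x

/-- Invariance under a transitive group of permutations of the coordinates. -/
def TransitiveSymmetric {n : ℕ} (f : (Fin n → Bool) → ℝ) : Prop :=
  ∃ G : Subgroup (Equiv.Perm (Fin n)),
    (∀ i j : Fin n, ∃ σ ∈ G, σ i = j) ∧
    ∀ σ ∈ G, ∀ x : Fin n → Bool, f (x ∘ σ) = f x

/-- The majority function: 1 iff more than half of the coordinates are 1. -/
def maj (n : ℕ) (x : Fin n → Bool) : ℝ :=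
  if n < 2 * (Finset.univ.filter (fun i => x i = true)).card then 1 else 0

/-- The dual function `f'(x) = 1 - f(1-x)`. -/
def dualFn {n : ℕ} (f : (Fin n → Bool) → ℝ) (x : Fin n → Bool) : ℝ :=
  1 - f (fun i => !(x i))

/-- The Bonamie–Beckner noise operator `T_δ`. -/
def Tnoise {n : ℕ} (δ : ℝ) (f : (Fin n → Bool) → ℝ) (x : Fin n → Bool) : ℝ :=
  ∑ S : Finset (Fin n), δ ^ S.card * coeff f S * walsh S x

/-- The AND function on the discrete cube. -/
def andFn (n : ℕ) (x : Fin n → Bool) : ℝ :=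
  if ∀ i, x i = true then 1 else 0

/-- The OR function on the discrete cube (the dual of AND). -/
def orFn (n : ℕ) (x : Fin n → Bool) : ℝ :=
  if ∃ i, x i = true then 1 else 0

def spin (a : Bool) : ℝ := if a then 1 else -1

lemma walsh_eq_prod_spin {n : ℕ} (S : Finset (Fin n)) (x : Fin n → Bool) :
    walsh S x = ∏ i ∈ S, spin (x i) := rfl

lemma coeff_empty {n : ℕ} (f : (Fin n → Bool) → ℝ) : coeff f ∅ = expect f := by
  simp [coeff, expect, walsh]

def corrKernel {n : ℕ} (ρ : ℝ) (x y : Fin n → Bool) : ℝ :=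
  ∏ i, (1 + ρ * spin (x i) * spin (y i)) / 4

lemma corrKernel_comm {n : ℕ} (ρ : ℝ) (x y : Fin n → Bool) :
    corrKernel ρ x y = corrKernel ρ y x := by
  simp only [corrKernel, mul_right_comm _ (spin (x _))]

lemma sum_corrKernel_right {n : ℕ} (ρ : ℝ) (x : Fin n → Bool) :
    ∑ y, corrKernel ρ x y = (2 ^ n)⁻¹ := by
  have hcoord (a : Bool) : ∑ b, (1 + ρ * spin a * spin b) / 4 = 2⁻¹ := by
    cases a <;> simp [spin] <;> ring
  calc ∑ y, corrKernel ρ x y = ∏ i, ∑ b, (1 + ρ * spin (x i) * spin b) / 4 :=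
        (Fintype.prod_sum fun i b => (1 + ρ * spin (x i) * spin b) / 4).symm
    _ = (2 ^ n)⁻¹ := by
        simp only [hcoord, Finset.prod_const, Finset.card_univ, Fintype.card_fin, inv_pow]

lemma corrKernel_eq_sum_walsh {n : ℕ} (ρ : ℝ) (x y : Fin n → Bool) :
    corrKernel ρ x y = (∑ S, ρ ^ S.card * walsh S x * walsh S y) / 4 ^ n := by
  rw [corrKernel, Finset.prod_div_distrib, Finset.prod_one_add, Finset.powerset_univ]
  simp only [Finset.prod_mul_distrib, Finset.prod_const, walsh_eq_prod_spin, Finset.card_univ,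
    Fintype.card_fin]

lemma sum_corrKernel_mul_mul {n : ℕ} (ρ : ℝ) (f g : (Fin n → Bool) → ℝ) :
    ∑ x, ∑ y, corrKernel ρ x y * f x * g y = expect f * expect g + bip ρ f g := by
  have hfourier : ∑ x, ∑ y, corrKernel ρ x y * f x * g y
      = ∑ S, coeff f S * coeff g S * ρ ^ S.card := by
    have hS (S : Finset (Fin n)) : coeff f S * coeff g S * ρ ^ S.card
        = ∑ x, ∑ y, ρ ^ S.card * walsh S x * walsh S y / 4 ^ n * f x * g y := by
      rw [coeff, coeff, div_mul_div_comm, Finset.sum_mul_sum, ← mul_pow, Finset.sum_div,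
        Finset.sum_mul]
      refine Finset.sum_congr rfl fun x _ => ?_
      rw [Finset.sum_div, Finset.sum_mul]
      exact Finset.sum_congr rfl fun y _ => by ring
    simp only [hS, corrKernel_eq_sum_walsh, Finset.sum_div, Finset.sum_mul]
    exact (Finset.sum_congr rfl fun x _ => Finset.sum_comm).trans Finset.sum_comm
  rw [hfourier, bip, Finset.filter_ne', ← Finset.add_sum_erase _ _ (Finset.mem_univ ∅),
    coeff_empty, coeff_empty, Finset.card_empty, pow_zero, mul_one]

lemma sum_corrKernel_mul_left {n : ℕ} (ρ : ℝ) (f : (Fin n → Bool) → ℝ) :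
    ∑ x, ∑ y, corrKernel ρ x y * f x = expect f := by
  simp only [← Finset.sum_mul, sum_corrKernel_right]
  rw [expect, div_eq_inv_mul, Finset.mul_sum]

lemma sum_corrKernel_mul_right {n : ℕ} (ρ : ℝ) (g : (Fin n → Bool) → ℝ) :
    ∑ x, ∑ y, corrKernel ρ x y * g y = expect g := by
  rw [Finset.sum_comm]
  simp only [corrKernel_comm ρ _]
  exact sum_corrKernel_mul_left ρ g

lemma sum_sum_corrKernel {n : ℕ} (ρ : ℝ) :
    ∑ x : Fin n → Bool, ∑ y, corrKernel ρ x y = 1 := by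
  simp [sum_corrKernel_right]

section Marginals

variable {α β γ : ℝ} (hsum : α + β + γ = 1 / 2)
include hsum

lemma sum_prTriple_third (a b : Bool) :
    ∑ c, prTriple α β γ a b c = (1 + (4 * α - 1) * spin a * spin b) / 4 := by
  cases a <;> cases b <;> simp [prTriple, spin] <;> linarith

lemma sum_prTriple_first (b c : Bool) :
    ∑ a, prTriple α β γ a b c = (1 + (4 * β - 1) * spin b * spin c) / 4 := by
  cases b <;> cases c <;> simp [prTriple, spin] <;> linarith

lemma sum_prTriple_second (a c : Bool) :
    ∑ b, prTriple α β γ a b c = (1 + (4 * γ - 1) * spin c * spin a) / 4 := by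
  cases a <;> cases c <;> simp [prTriple, spin] <;> linarith

variable {n : ℕ}

lemma sum_prProfile_third (x y : Fin n → Bool) :
    ∑ z, prProfile α β γ x y z = corrKernel (4 * α - 1) x y := by
  rw [corrKernel, ← Finset.prod_congr rfl fun i _ => sum_prTriple_third hsum (x i) (y i)]
  exact (Fintype.prod_sum fun i c => prTriple α β γ (x i) (y i) c).symm

lemma sum_prProfile_first (y z : Fin n → Bool) :
    ∑ x, prProfile α β γ x y z = corrKernel (4 * β - 1) y z := by
  rw [corrKernel, ← Finset.prod_congr rfl fun i _ => sum_prTriple_first hsum (y i) (z i)]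
  exact (Fintype.prod_sum fun i a => prTriple α β γ a (y i) (z i)).symm

lemma sum_prProfile_second (z x : Fin n → Bool) :
    ∑ y, prProfile α β γ x y z = corrKernel (4 * γ - 1) z x := by
  rw [corrKernel, ← Finset.prod_congr rfl fun i _ => sum_prTriple_second hsum (x i) (z i)]
  exact (Fintype.prod_sum fun i b => prTriple α β γ (x i) b (z i)).symm

variable (F : (Fin n → Bool) → (Fin n → Bool) → ℝ)

lemma sum_prProfile_mul_of_fst_snd :
    ∑ x, ∑ y, ∑ z, prProfile α β γ x y z * F x y
      = ∑ x, ∑ y, corrKernel (4 * α - 1) x y * F x y := by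
  simp only [← Finset.sum_mul, sum_prProfile_third hsum]

lemma sum_prProfile_mul_of_snd_thd :
    ∑ x, ∑ y, ∑ z, prProfile α β γ x y z * F y z
      = ∑ y, ∑ z, corrKernel (4 * β - 1) y z * F y z := by
  rw [Finset.sum_comm]
  refine Finset.sum_congr rfl fun y _ => ?_
  rw [Finset.sum_comm]
  simp only [← Finset.sum_mul, sum_prProfile_first hsum]

lemma sum_prProfile_mul_of_thd_fst :
    ∑ x, ∑ y, ∑ z, prProfile α β γ x y z * F z x
      = ∑ z, ∑ x, corrKernel (4 * γ - 1) z x * F z x := by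
  calc ∑ x, ∑ y, ∑ z, prProfile α β γ x y z * F z x
      = ∑ x, ∑ z, corrKernel (4 * γ - 1) z x * F z x := by
        refine Finset.sum_congr rfl fun x _ => ?_
        rw [Finset.sum_comm]
        simp only [← Finset.sum_mul, sum_prProfile_second hsum]
    _ = ∑ z, ∑ x, corrKernel (4 * γ - 1) z x * F z x := Finset.sum_comm

end Marginals

theorem irrational_choice_formula_general {n : ℕ}
    (α β γ : ℝ)
    (hsum : α + β + γ = 1 / 2)
    (f g h : (Fin n → Bool) → ℝ) :
    W α β γ f g h =
      expect f * expect g * expect h +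
        (1 - expect f) * (1 - expect g) * (1 - expect h) +
        bip (4 * α - 1) f g + bip (4 * β - 1) g h + bip (4 * γ - 1) h f := by
  have hsplit : ∀ x y z, f x * g y * h z + (1 - f x) * (1 - g y) * (1 - h z)
      = (1 - f x) * (1 - g y) + g y * h z + (h z * f x - h z) := fun _ _ _ => by ring
  simp only [W, hsplit, mul_add, Finset.sum_add_distrib]
  rw [sum_prProfile_mul_of_fst_snd hsum (fun x y => (1 - f x) * (1 - g y)),
    sum_prProfile_mul_of_snd_thd hsum (fun y z => g y * h z),
    sum_prProfile_mul_of_thd_fst hsum (fun z x => h z * f x - h z)]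
  simp only [mul_sub, sub_mul, one_mul, mul_one, ← mul_assoc, Finset.sum_sub_distrib,
    sum_corrKernel_mul_mul, sum_corrKernel_mul_left, sum_corrKernel_mul_right, sum_sum_corrKernel]
  ring

/-- the Fourier-theoretic formula for the probability of an
irrational choice under an even product distribution `D(α,β,γ)`. -/
theorem irrational_choice_formula {n : ℕ} (hn : 1 ≤ n)
    (α β γ : ℝ) (hα : 0 ≤ α) (hβ : 0 ≤ β) (hγ : 0 ≤ γ)
    (hsum : α + β + γ = 1 / 2)
    (f g h : (Fin n → Bool) → ℝ)
    (hf : IsBooleanFn f) (hg : IsBooleanFn g) (hh : IsBooleanFn h) :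
    W α β γ f g h =
      expect f * expect g * expect h +
        (1 - expect f) * (1 - expect g) * (1 - expect h) +
        bip (4 * α - 1) f g + bip (4 * β - 1) g h + bip (4 * γ - 1) h f :=
  irrational_choice_formula_general α β γ hsum f g h

end GSWF
end
end

section
/- For every integer k ≥ 1 and all real numbers x, y, z with −1 ≤ x, y, z ≤ 1 and x + y + z = 1, one has x³ + y³ + z³ ≥ x^{2k+1} + y^{2k+1} + z^{2k+1}. -/
open Finset Real

noncomputable section

namespace GSWF

/-!
For odd `n` the sums `Sₙ = xⁿ + yⁿ + zⁿ` decrease in steps of two: `Sₙ - Sₙ₊₂ = ∑ xⁿ (1 - x²)`,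
and every term is nonnegative except the one of a negative variable, say `z = -w`. Then
`x + y = 1 + w` with `x, y ≤ 1` gives `1 - x = y - w ≥ 0` and `1 - y = x - w ≥ 0`, so
monotonicity of `t ↦ tⁿ (1 + t)` on `[w, ∞)` yields
`xⁿ (1 - x²) + yⁿ (1 - y²) ≥ wⁿ (1 + w) ((y - w) + (x - w)) = wⁿ (1 - w²)`.
-/

theorem pow_mul_one_sub_sq_le_add (n : ℕ) {w x y : ℝ} (hw : 0 ≤ w) (hwx : w ≤ x) (hwy : w ≤ y)
    (hsum : x + y = 1 + w) :
    w ^ n * (1 - w ^ 2) ≤ x ^ n * (1 - x ^ 2) + y ^ n * (1 - y ^ 2) := by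
  have hgrowth {t : ℝ} (hwt : w ≤ t) : w ^ n * (1 + w) ≤ t ^ n * (1 + t) :=
    mul_le_mul (pow_le_pow_left₀ hw hwt n) (by linarith) (by positivity)
      (pow_nonneg (hw.trans hwt) n)
  calc w ^ n * (1 - w ^ 2) = w ^ n * (1 + w) * (y - w) + w ^ n * (1 + w) * (x - w) := by
        linear_combination -(w ^ n * (1 + w)) * hsum
    _ ≤ x ^ n * (1 + x) * (y - w) + y ^ n * (1 + y) * (x - w) :=
        add_le_add (mul_le_mul_of_nonneg_right (hgrowth hwx) (by linarith))
          (mul_le_mul_of_nonneg_right (hgrowth hwy) (by linarith))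
    _ = x ^ n * (1 - x ^ 2) + y ^ n * (1 - y ^ 2) := by
        linear_combination (x ^ n * (1 + x) + y ^ n * (1 + y)) * hsum

theorem sum_pow_add_two_le_of_nonpos {n : ℕ} (hn : Odd n) {x y z : ℝ} (hx : x ≤ 1) (hy : y ≤ 1)
    (hz : z ≤ 0) (hsum : x + y + z = 1) :
    x ^ (n + 2) + y ^ (n + 2) + z ^ (n + 2) ≤ x ^ n + y ^ n + z ^ n := by
  have key := pow_mul_one_sub_sq_le_add n (w := -z) (x := x) (y := y)
    (by linarith) (by linarith) (by linarith) (by linarith)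
  rw [hn.neg_pow, neg_sq] at key
  linear_combination key

theorem sum_pow_add_two_le {n : ℕ} (hn : Odd n) {x y z : ℝ} (hx : x ≤ 1) (hy : y ≤ 1)
    (hz : z ≤ 1) (hsum : x + y + z = 1) :
    x ^ (n + 2) + y ^ (n + 2) + z ^ (n + 2) ≤ x ^ n + y ^ n + z ^ n := by
  rcases le_or_gt x 0 with hx0 | hx0
  · linarith [sum_pow_add_two_le_of_nonpos hn hy hz hx0 (by linarith)]
  rcases le_or_gt y 0 with hy0 | hy0
  · linarith [sum_pow_add_two_le_of_nonpos hn hz hx hy0 (by linarith)]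
  rcases le_or_gt z 0 with hz0 | hz0
  · exact sum_pow_add_two_le_of_nonpos hn hx hy hz0 hsum
  have hn2 : n ≤ n + 2 := n.le_add_right 2
  linarith [pow_le_pow_of_le_one hx0.le hx hn2, pow_le_pow_of_le_one hy0.le hy hn2,
    pow_le_pow_of_le_one hz0.le hz hn2]

theorem antitone_sum_odd_pow {x y z : ℝ} (hx : x ≤ 1) (hy : y ≤ 1) (hz : z ≤ 1)
    (hsum : x + y + z = 1) :
    Antitone fun m : ℕ => x ^ (2 * m + 1) + y ^ (2 * m + 1) + z ^ (2 * m + 1) :=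
  antitone_nat_of_succ_le fun m => by
    simpa only [show 2 * (m + 1) + 1 = 2 * m + 1 + 2 by ring] using
      sum_pow_add_two_le (odd_two_mul_add_one m) hx hy hz hsum

theorem odd_power_sum_inequality_general (k : ℕ) (hk : 1 ≤ k) (x y z : ℝ)
    (hx₂ : x ≤ 1) (hy₂ : y ≤ 1) (hz₂ : z ≤ 1) (hsum : x + y + z = 1) :
    x ^ (2 * k + 1) + y ^ (2 * k + 1) + z ^ (2 * k + 1) ≤
      x ^ 3 + y ^ 3 + z ^ 3 :=
  antitone_sum_odd_pow hx₂ hy₂ hz₂ hsum hk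

/-- for `k ≥ 1` and `x,y,z ∈ [-1,1]` with `x + y + z = 1`,
`x³ + y³ + z³ ≥ x^{2k+1} + y^{2k+1} + z^{2k+1}`. -/
theorem odd_power_sum_inequality (k : ℕ) (hk : 1 ≤ k) (x y z : ℝ)
    (hx₁ : -1 ≤ x) (hx₂ : x ≤ 1) (hy₁ : -1 ≤ y) (hy₂ : y ≤ 1)
    (hz₁ : -1 ≤ z) (hz₂ : z ≤ 1) (hsum : x + y + z = 1) :
    x ^ (2 * k + 1) + y ^ (2 * k + 1) + z ^ (2 * k + 1) ≤
      x ^ 3 + y ^ 3 + z ^ 3 :=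
  odd_power_sum_inequality_general k hk x y z hx₂ hy₂ hz₂ hsum

end GSWF
end
end

section
/- Consider a GSWF on three alternatives with n voters satisfying the IIA condition, whose choice functions f, g, h : {0,1}^n → {0,1} are monotone increasing and balanced (E[f] = E[g] = E[h] = 1/2). If the individual preferences are independent and uniformly distributed (i.e., distributed according to D(1/6,1/6,1/6)), then the probability of a rational choice is at least 3/4; equivalently, W(f,g,h) ≤ 1/4. -/
open Finset Real

noncomputable section

namespace GSWF

/-!
Pointwise `f g h + (1 - f)(1 - g)(1 - h) = 1/4 + (f - ½)(g - ½) + (f - ½)(h - ½) + (g - ½)(h - ½)`.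
Summing out the third comparison, `W` is `1/4` plus three correlations of centred choice
functions under the law of two comparisons of one voter, repeated independently over voters.
That law puts weight `p` on equal and `q ≥ p` on different opinions, so the two opinions are
negatively correlated, and a Harris-type induction on the number of voters shows that two
monotone functions are then negatively correlated too. As `f` and `g` are balanced, every
pair contains a centred function, so all three correlations are nonpositive.
-/

variable {n : ℕ}

def pairWeight (p q : ℝ) (a b : Bool) : ℝ := if a = b then p else q

def pairCorr (p q : ℝ) (f g : (Fin n → Bool) → ℝ) : ℝ :=
  ∑ x, ∑ y, (∏ i, pairWeight p q (x i) (y i)) * (f x * g y)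

lemma sum_cube_succ {M : Type*} [AddCommMonoid M] (F : (Fin (n + 1) → Bool) → M) :
    ∑ x, F x = ∑ a, ∑ x : Fin n → Bool, F (Fin.cons a x) := by
  rw [← (Fin.consEquiv fun _ => Bool).sum_comp, Fintype.sum_prod_type]
  rfl

section Correlation

variable {p q : ℝ}

lemma pairWeight_nonneg (hp : 0 ≤ p) (hq : 0 ≤ q) (a b : Bool) : 0 ≤ pairWeight p q a b := by
  unfold pairWeight; split_ifs <;> assumption

lemma sum_pairWeight (a : Bool) : ∑ b, pairWeight p q a b = p + q := by
  cases a <;> simp [pairWeight, add_comm]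

lemma sum_pairWeight_mul_le (hpq : p ≤ q) {u v : Bool → ℝ} (hu : Monotone u) (hv : Monotone v) :
    ∑ a, ∑ b, pairWeight p q a b * (u a * v b) ≤ (p + q) / 2 * ((∑ a, u a) * ∑ b, v b) := by
  have hu' := hu (Bool.false_le true)
  have hv' := hv (Bool.false_le true)
  simp only [Fintype.sum_bool, pairWeight, if_pos, Bool.true_eq_false, Bool.false_eq_true,
    if_false]
  linarith [mul_nonneg (mul_nonneg (sub_nonneg.2 hpq) (sub_nonneg.2 hu')) (sub_nonneg.2 hv')]

lemma pairCorr_succ (f g : (Fin (n + 1) → Bool) → ℝ) :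
    pairCorr p q f g = ∑ a, ∑ b, pairWeight p q a b *
      pairCorr p q (fun x => f (Fin.cons a x)) (fun y => g (Fin.cons b y)) := by
  simp only [pairCorr, sum_cube_succ (n := n), Fin.prod_univ_succ, Fin.cons_zero, Fin.cons_succ,
    mul_sum]
  refine sum_congr rfl fun a _ => ?_
  rw [sum_comm]
  refine sum_congr rfl fun b _ => sum_congr rfl fun x _ => sum_congr rfl fun y _ => ?_
  ring

theorem pairCorr_le (hp : 0 ≤ p) (hpq : p ≤ q) {f g : (Fin n → Bool) → ℝ}
    (hf : Monotone f) (hg : Monotone g) :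
    pairCorr p q f g ≤ ((p + q) / 2) ^ n * ((∑ x, f x) * ∑ y, g y) := by
  induction n with
  | zero => simp [pairCorr]
  | succ n ih =>
    set F : Bool → ℝ := fun a => ∑ x, f (Fin.cons a x)
    set G : Bool → ℝ := fun b => ∑ y, g (Fin.cons b y)
    have hF : Monotone F := fun a b hab =>
      sum_le_sum fun x _ => hf (Fin.cons_le_cons.2 ⟨hab, le_rfl⟩)
    have hG : Monotone G := fun a b hab =>
      sum_le_sum fun y _ => hg (Fin.cons_le_cons.2 ⟨hab, le_rfl⟩)
    calc pairCorr p q f g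
        = ∑ a, ∑ b, pairWeight p q a b *
            pairCorr p q (fun x => f (Fin.cons a x)) (fun y => g (Fin.cons b y)) :=
          pairCorr_succ f g
      _ ≤ ∑ a, ∑ b, pairWeight p q a b * (((p + q) / 2) ^ n * (F a * G b)) := by
          gcongr with a _ b _
          · exact pairWeight_nonneg hp (hp.trans hpq) a b
          · exact ih (fun x y h => hf (Fin.cons_le_cons.2 ⟨le_rfl, h⟩))
              (fun x y h => hg (Fin.cons_le_cons.2 ⟨le_rfl, h⟩))
      _ = ((p + q) / 2) ^ n * ∑ a, ∑ b, pairWeight p q a b * (F a * G b) := by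
          simp only [mul_sum]
          ring_nf
      _ ≤ ((p + q) / 2) ^ n * ((p + q) / 2 * ((∑ a, F a) * ∑ b, G b)) := by
          have : 0 ≤ (p + q) / 2 := by linarith
          gcongr
          exact sum_pairWeight_mul_le hpq hF hG
      _ = ((p + q) / 2) ^ (n + 1) * ((∑ x, f x) * ∑ y, g y) := by
          rw [sum_cube_succ f, sum_cube_succ g, pow_succ]
          ring

lemma pairCorr_nonpos (hp : 0 ≤ p) (hpq : p ≤ q) {f g : (Fin n → Bool) → ℝ}
    (hf : Monotone f) (hg : Monotone g) (hf₀ : ∑ x, f x = 0) : pairCorr p q f g ≤ 0 := by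
  simpa [hf₀] using pairCorr_le hp hpq hf hg

end Correlation

section Profile

variable {α β γ : ℝ}

lemma sum_prTriple_right (a b : Bool) : ∑ c, prTriple α β γ a b c = pairWeight α (β + γ) a b := by
  cases a <;> cases b <;> simp [prTriple, pairWeight, add_comm]

lemma sum_prTriple_mid (a c : Bool) : ∑ b, prTriple α β γ a b c = pairWeight γ (α + β) a c := by
  cases a <;> cases c <;> simp [prTriple, pairWeight, add_comm]

lemma sum_prTriple_left (b c : Bool) : ∑ a, prTriple α β γ a b c = pairWeight β (α + γ) b c := by
  cases b <;> cases c <;> simp [prTriple, pairWeight, add_comm]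

lemma sum_prProfile_right (x y : Fin n → Bool) :
    ∑ z, prProfile α β γ x y z = ∏ i, pairWeight α (β + γ) (x i) (y i) := by
  simp only [prProfile, ← sum_prTriple_right, Fintype.prod_sum]

lemma sum_prProfile_mid (x z : Fin n → Bool) :
    ∑ y, prProfile α β γ x y z = ∏ i, pairWeight γ (α + β) (x i) (z i) := by
  simp only [prProfile, ← sum_prTriple_mid, Fintype.prod_sum]

lemma sum_prProfile_left (y z : Fin n → Bool) :
    ∑ x, prProfile α β γ x y z = ∏ i, pairWeight β (α + γ) (y i) (z i) := by
  simp only [prProfile, ← sum_prTriple_left, Fintype.prod_sum]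

lemma sum_prProfile_mul_xy (f g : (Fin n → Bool) → ℝ) :
    ∑ x, ∑ y, ∑ z, prProfile α β γ x y z * (f x * g y) = pairCorr α (β + γ) f g := by
  simp only [← sum_mul, sum_prProfile_right, pairCorr]

lemma sum_prProfile_mul_xz (f h : (Fin n → Bool) → ℝ) :
    ∑ x, ∑ y, ∑ z, prProfile α β γ x y z * (f x * h z) = pairCorr γ (α + β) f h := by
  refine sum_congr rfl fun x _ => ?_
  rw [sum_comm]
  simp only [← sum_mul, sum_prProfile_mid]

lemma sum_prProfile_mul_yz (g h : (Fin n → Bool) → ℝ) :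
    ∑ x, ∑ y, ∑ z, prProfile α β γ x y z * (g y * h z) = pairCorr β (α + γ) g h := by
  rw [sum_comm]
  refine sum_congr rfl fun y _ => ?_
  rw [sum_comm]
  simp only [← sum_mul, sum_prProfile_left]

lemma sum_prProfile (hsum : α + β + γ = 1 / 2) :
    ∑ x : Fin n → Bool, ∑ y, ∑ z, prProfile α β γ x y z = 1 := by
  simp only [sum_prProfile_right, ← Fintype.prod_sum, sum_pairWeight, ← add_assoc, hsum]
  simp

lemma W_eq (f g h : (Fin n → Bool) → ℝ) :
    W α β γ f g h = (∑ x : Fin n → Bool, ∑ y, ∑ z, prProfile α β γ x y z) / 4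
      + pairCorr α (β + γ) (fun x => f x - 1 / 2) (fun y => g y - 1 / 2)
      + pairCorr γ (α + β) (fun x => f x - 1 / 2) (fun z => h z - 1 / 2)
      + pairCorr β (α + γ) (fun y => g y - 1 / 2) (fun z => h z - 1 / 2) := by
  rw [← sum_prProfile_mul_xy, ← sum_prProfile_mul_xz, ← sum_prProfile_mul_yz]
  simp only [W, sum_div, ← sum_add_distrib]
  refine sum_congr rfl fun x _ => sum_congr rfl fun y _ => sum_congr rfl fun z _ => ?_
  ring

end Profile

lemma sum_sub_half_eq_zero {f : (Fin n → Bool) → ℝ} (hf : expect f = 1 / 2) :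
    ∑ x, (f x - 1 / 2) = 0 := by
  rw [expect, div_eq_iff (by positivity)] at hf
  simp [sum_sub_distrib, hf, mul_comm]

theorem W_le_quarter {α β γ : ℝ} (hα : 0 ≤ α) (hβ : 0 ≤ β) (hγ : 0 ≤ γ)
    (hα' : α ≤ 1 / 4) (hβ' : β ≤ 1 / 4) (hγ' : γ ≤ 1 / 4) (hsum : α + β + γ = 1 / 2)
    {f g h : (Fin n → Bool) → ℝ} (hf : Monotone f) (hg : Monotone g) (hh : Monotone h)
    (hfb : expect f = 1 / 2) (hgb : expect g = 1 / 2) :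
    W α β γ f g h ≤ 1 / 4 := by
  have hf' : Monotone fun x => f x - 1 / 2 := fun _ _ hxy => sub_le_sub_right (hf hxy) _
  have hg' : Monotone fun x => g x - 1 / 2 := fun _ _ hxy => sub_le_sub_right (hg hxy) _
  have hh' : Monotone fun x => h x - 1 / 2 := fun _ _ hxy => sub_le_sub_right (hh hxy) _
  have hfg := pairCorr_nonpos (q := β + γ) hα (by linarith) hf' hg' (sum_sub_half_eq_zero hfb)
  have hfh := pairCorr_nonpos (q := α + β) hγ (by linarith) hf' hh' (sum_sub_half_eq_zero hfb)
  have hgh := pairCorr_nonpos (q := α + γ) hβ (by linarith) hg' hh' (sum_sub_half_eq_zero hgb)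
  rw [W_eq, sum_prProfile hsum]
  linarith

theorem monotone_balanced_rationality_general {n : ℕ}
    (f g h : (Fin n → Bool) → ℝ)
    (hfm : MonotoneCube f) (hgm : MonotoneCube g) (hhm : MonotoneCube h)
    (hfb : expect f = 1 / 2) (hgb : expect g = 1 / 2) :
    W (1 / 6) (1 / 6) (1 / 6) f g h ≤ 1 / 4 :=
  W_le_quarter (by norm_num) (by norm_num) (by norm_num) (by norm_num) (by norm_num) (by norm_num)
    (by norm_num) hfm hgm hhm hfb hgb

/-- Kalai's conjecture: if the choice functions are monotone
and balanced and the preferences are uniform, the probability of a rational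
choice is at least 3/4, i.e. `W(f,g,h) ≤ 1/4`. -/
theorem monotone_balanced_rationality {n : ℕ} (hn : 1 ≤ n)
    (f g h : (Fin n → Bool) → ℝ)
    (hf : IsBooleanFn f) (hg : IsBooleanFn g) (hh : IsBooleanFn h)
    (hfm : MonotoneCube f) (hgm : MonotoneCube g) (hhm : MonotoneCube h)
    (hfb : expect f = 1 / 2) (hgb : expect g = 1 / 2)
    (hhb : expect h = 1 / 2) :
    W (1 / 6) (1 / 6) (1 / 6) f g h ≤ 1 / 4 :=
  monotone_balanced_rationality_general f g h hfm hgm hhm hfb hgb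

end GSWF
end
end

section
/- Let f, g : {0,1}^n → {0,1} be Boolean functions with E[f] = p₁ and E[g] = p₂, and let −1 ≤ δ ≤ 1. Then ⟨⟨f,g⟩⟩_δ ≥ −(1−p₁)(1−p₂). Moreover, if −1 < δ < 1, then equality holds if and only if f ≡ 1 or g ≡ 1. -/
/-!
Adding `(1 - p₁)(1 - p₂) = (1 - f)^(∅) (1 - g)^(∅)` to `⟨⟨f, g⟩⟩_δ` completes it to the full
sum `∑_S (1 - f)^(S) (1 - g)^(S) δ^|S|`, since `(1 - f)^(S) = -f̂(S)` for `S ≠ ∅`. That sum is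
`E[(1 - f)(x) (1 - g)(y)]` for a `δ`-correlated pair `(x, y)`, which is nonnegative because `f`
and `g` are `{0,1}`-valued. For `|δ| < 1` every pair `(x, y)` has positive probability, so the
expectation vanishes only if `1 - f ≡ 0` or `1 - g ≡ 0`.
-/

open Finset Real

noncomputable section

namespace GSWF

/-- The law of a `δ`-correlated pair: `x` uniform, and each `y i = x i` independently with
probability `(1 + δ) / 2`. -/
def noiseKernel {n : ℕ} (δ : ℝ) (x y : Fin n → Bool) : ℝ :=
  ∏ i, if x i = y i then (1 + δ) / 4 else (1 - δ) / 4

lemma noiseKernel_nonneg {n : ℕ} {δ : ℝ} (h₁ : -1 ≤ δ) (h₂ : δ ≤ 1) (x y : Fin n → Bool) :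
    0 ≤ noiseKernel δ x y :=
  prod_nonneg fun i _ => by split <;> linarith

lemma noiseKernel_pos {n : ℕ} {δ : ℝ} (h₁ : -1 < δ) (h₂ : δ < 1) (x y : Fin n → Bool) :
    0 < noiseKernel δ x y :=
  prod_pos fun i _ => by split <;> linarith

lemma sum_walsh_mul_walsh_mul_pow {n : ℕ} (δ : ℝ) (x y : Fin n → Bool) :
    ∑ S : Finset (Fin n), walsh S x * walsh S y * δ ^ S.card
      = 4 ^ n * noiseKernel δ x y := by
  have hS : ∀ S : Finset (Fin n), walsh S x * walsh S y * δ ^ S.card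
      = ∏ i ∈ S, δ * ((if x i then 1 else -1) * (if y i then 1 else -1)) := by
    intro S
    rw [prod_mul_distrib, prod_mul_distrib, prod_const, walsh, walsh]
    ring
  rw [sum_congr rfl fun S _ => hS S, ← powerset_univ, ← prod_one_add, noiseKernel,
    ← Fin.prod_const, ← prod_mul_distrib]
  refine prod_congr rfl fun i _ => ?_
  cases x i <;> cases y i <;> norm_num <;> ring

lemma sum_coeff_mul_coeff_mul_pow {n : ℕ} (δ : ℝ) (f g : (Fin n → Bool) → ℝ) :
    ∑ S : Finset (Fin n), coeff f S * coeff g S * δ ^ S.card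
      = ∑ x, ∑ y, noiseKernel δ x y * f x * g y := by
  calc ∑ S : Finset (Fin n), coeff f S * coeff g S * δ ^ S.card
      = ∑ S : Finset (Fin n), ∑ x, ∑ y,
          f x * g y * (walsh S x * walsh S y * δ ^ S.card) / 4 ^ n := by
        refine sum_congr rfl fun S _ => ?_
        rw [coeff, coeff, div_mul_div_comm, ← mul_pow, sum_mul_sum, div_mul_eq_mul_div, sum_mul,
          sum_div]
        refine sum_congr rfl fun x _ => ?_
        rw [sum_mul, sum_div]
        refine sum_congr rfl fun y _ => ?_
        norm_num
        ring
    _ = ∑ x, ∑ y, f x * g y * (∑ S : Finset (Fin n), walsh S x * walsh S y * δ ^ S.card)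
          / 4 ^ n := by
        rw [sum_comm]
        simp only [mul_sum, sum_div]
        exact sum_congr rfl fun x _ => sum_comm
    _ = ∑ x, ∑ y, noiseKernel δ x y * f x * g y := by
        simp only [sum_walsh_mul_walsh_mul_pow]
        refine sum_congr rfl fun x _ => sum_congr rfl fun y _ => ?_
        field_simp

lemma sum_walsh_eq_zero {n : ℕ} {S : Finset (Fin n)} (hS : S.Nonempty) :
    ∑ x : Fin n → Bool, walsh S x = 0 := by
  obtain ⟨j, hj⟩ := hS
  have hw : ∀ x : Fin n → Bool,
      walsh S x = ∏ i, if i ∈ S then (if x i then (1 : ℝ) else -1) else 1 := by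
    intro x
    rw [prod_ite_mem, univ_inter, walsh]
  simp_rw [hw]
  rw [← Fintype.prod_sum fun i (b : Bool) => if i ∈ S then (if b then (1 : ℝ) else -1) else 1]
  exact prod_eq_zero (mem_univ j) (by simp [hj])

lemma coeff_one_sub {n : ℕ} (f : (Fin n → Bool) → ℝ) {S : Finset (Fin n)} (hS : S.Nonempty) :
    coeff (fun x => 1 - f x) S = -coeff f S := by
  simp only [coeff, sub_mul, one_mul, sum_sub_distrib, sum_walsh_eq_zero hS, zero_sub, neg_div]

lemma expect_one_sub {n : ℕ} (f : (Fin n → Bool) → ℝ) :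
    expect (fun x => 1 - f x) = 1 - expect f := by
  simp [expect, sum_sub_distrib, sub_div]

lemma one_sub_expect_mul_one_sub_expect_add_bip {n : ℕ} (δ : ℝ) (f g : (Fin n → Bool) → ℝ) :
    (1 - expect f) * (1 - expect g) + bip δ f g
      = ∑ x, ∑ y, noiseKernel δ x y * (1 - f x) * (1 - g y) := by
  rw [← sum_coeff_mul_coeff_mul_pow, ← add_sum_erase _ _ (mem_univ ∅), bip]
  congr 1
  · simp [coeff_empty, expect_one_sub]
  · rw [filter_ne']
    refine sum_congr rfl fun S hS => ?_
    have hS : S.Nonempty := nonempty_iff_ne_empty.2 (mem_erase.1 hS).1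
    rw [coeff_one_sub f hS, coeff_one_sub g hS]
    ring

lemma sum_sum_mul_mul_eq_zero_iff {α β : Type*} [Fintype α] [Fintype β]
    {w : α → β → ℝ} {u : α → ℝ} {v : β → ℝ}
    (hw : ∀ x y, 0 < w x y) (hu : ∀ x, 0 ≤ u x) (hv : ∀ y, 0 ≤ v y) :
    ∑ x, ∑ y, w x y * u x * v y = 0 ↔ (∀ x, u x = 0) ∨ (∀ y, v y = 0) := by
  have hterm : ∀ x y, 0 ≤ w x y * u x * v y := fun x y =>
    mul_nonneg (mul_nonneg (hw x y).le (hu x)) (hv y)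
  rw [← Fintype.sum_prod_type', Fintype.sum_eq_zero_iff_of_nonneg fun p => hterm p.1 p.2]
  simp only [funext_iff, Prod.forall, Pi.zero_apply, mul_eq_zero, (hw _ _).ne', false_or]
  constructor
  · intro h
    by_contra! hne
    obtain ⟨⟨x, hx⟩, ⟨y, hy⟩⟩ := hne
    exact (h x y).elim hx hy
  · rintro (h | h) x y
    exacts [Or.inl (h x), Or.inr (h y)]

lemma IsBooleanFn.le_one {n : ℕ} {f : (Fin n → Bool) → ℝ} (hf : IsBooleanFn f) (x : Fin n → Bool) :
    f x ≤ 1 := by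
  rcases hf x with h | h <;> simp [h]

theorem boolean_biased_product_lower_bound_general {n : ℕ}
    (f g : (Fin n → Bool) → ℝ)
    (hf : IsBooleanFn f) (hg : IsBooleanFn g)
    (p₁ p₂ : ℝ) (hp₁ : expect f = p₁) (hp₂ : expect g = p₂)
    (δ : ℝ) (hδ₁ : -1 ≤ δ) (hδ₂ : δ ≤ 1) :
    -((1 - p₁) * (1 - p₂)) ≤ bip δ f g ∧
    (-1 < δ → δ < 1 →
      (bip δ f g = -((1 - p₁) * (1 - p₂)) ↔
        (∀ x, f x = 1) ∨ (∀ x, g x = 1))) := by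
  subst hp₁ hp₂
  have key := one_sub_expect_mul_one_sub_expect_add_bip δ f g
  have hf' : ∀ x, 0 ≤ 1 - f x := fun x => sub_nonneg.2 (hf.le_one x)
  have hg' : ∀ y, 0 ≤ 1 - g y := fun y => sub_nonneg.2 (hg.le_one y)
  constructor
  · have : 0 ≤ ∑ x, ∑ y, noiseKernel δ x y * (1 - f x) * (1 - g y) :=
      sum_nonneg fun x _ => sum_nonneg fun y _ =>
        mul_nonneg (mul_nonneg (noiseKernel_nonneg hδ₁ hδ₂ x y) (hf' x)) (hg' y)
    linarith
  · intro hδ₁' hδ₂'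
    rw [← sub_eq_zero, sub_neg_eq_add, add_comm, key,
      sum_sum_mul_mul_eq_zero_iff (noiseKernel_pos hδ₁' hδ₂') hf' hg']
    simp only [sub_eq_zero, @eq_comm ℝ 1]

/-- for Boolean `f, g` with expectations `p₁, p₂` and
`-1 ≤ δ ≤ 1`, `⟨⟨f,g⟩⟩_δ ≥ -(1-p₁)(1-p₂)`; for `-1 < δ < 1`, equality
holds iff `f ≡ 1` or `g ≡ 1`. -/
theorem boolean_biased_product_lower_bound {n : ℕ} (hn : 1 ≤ n)
    (f g : (Fin n → Bool) → ℝ)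
    (hf : IsBooleanFn f) (hg : IsBooleanFn g)
    (p₁ p₂ : ℝ) (hp₁ : expect f = p₁) (hp₂ : expect g = p₂)
    (δ : ℝ) (hδ₁ : -1 ≤ δ) (hδ₂ : δ ≤ 1) :
    -((1 - p₁) * (1 - p₂)) ≤ bip δ f g ∧
    (-1 < δ → δ < 1 →
      (bip δ f g = -((1 - p₁) * (1 - p₂)) ↔
        (∀ x, f x = 1) ∨ (∀ x, g x = 1))) :=
  boolean_biased_product_lower_bound_general f g hf hg p₁ p₂ hp₁ hp₂ δ hδ₁ hδ₂

end GSWF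
end
end
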